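/- arXiv:2208.06170 — 4 statements merged into one kernel-verified Lean document; each statement's English description precedes it below -/
import Mathlib

section
/- Let P be a contraction on a Hilbert space H and let A_* be the strong limit of the sequence {P^n P^{*n}}. Then P^n A_* P^{*n} = A_* for every n ≥ 1. -/
open ContinuousLinearMap Filter Topology

/-- If `P` is a contraction and `A_*` is the strong limit of `P^n P^{*n}`, then
`P^n A_* P^{*n} = A_*` for every `n ≥ 1`. -/
theorem stmt_2 {H : Type*} [NormedAddCommGroup H] [InnerProductSpace ℂ H] [CompleteSpace H]
    (P A : H →L[ℂ] H) (hP : ‖P‖ ≤ 1)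
    (hA : ∀ x : H, Tendsto (fun n : ℕ => (P ^ n * (adjoint P) ^ n) x) atTop (𝓝 (A x))) :
    ∀ n : ℕ, 1 ≤ n → P ^ n * A * (adjoint P) ^ n = A := by
  intro n _
  ext x
  have h1 : Tendsto (fun m : ℕ => (P ^ n) ((P ^ m * (adjoint P) ^ m) (((adjoint P) ^ n) x)))
      atTop (𝓝 ((P ^ n) (A (((adjoint P) ^ n) x)))) :=
    ((P ^ n).continuous.tendsto _).comp (hA (((adjoint P) ^ n) x))
  have h2 : Tendsto (fun m : ℕ => (P ^ (m + n) * (adjoint P) ^ (m + n)) x) atTop (𝓝 (A x)) :=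
    (hA x).comp (tendsto_add_atTop_nat n)
  have heq : (fun m : ℕ => (P ^ n) ((P ^ m * (adjoint P) ^ m) (((adjoint P) ^ n) x)))
      = fun m : ℕ => (P ^ (m + n) * (adjoint P) ^ (m + n)) x := by
    funext m
    have hop : P ^ n * (P ^ m * (adjoint P) ^ m) * (adjoint P) ^ n
        = P ^ (m + n) * (adjoint P) ^ (m + n) := by
      rw [pow_add, pow_add, pow_mul_comm P m n]; simp only [mul_assoc]
    calc (P ^ n) ((P ^ m * (adjoint P) ^ m) (((adjoint P) ^ n) x))
        = (P ^ n * (P ^ m * (adjoint P) ^ m) * (adjoint P) ^ n) x := rfl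
      _ = (P ^ (m + n) * (adjoint P) ^ (m + n)) x := by rw [hop]
  rw [heq] at h1
  have := tendsto_nhds_unique h1 h2
  simpa using this
end

section
/- Let P be a contraction on a Hilbert space H and A_* the strong limit of {P^n P^{*n}}. Then the map A_*^{1/2} x ↦ A_*^{1/2} P^* x extends to a well-defined isometry on the closure of the range of A_* (equivalently, ‖A_*^{1/2} P^* x‖ = ‖A_*^{1/2} x‖ for all x ∈ H). -/
/-!
Passing to the limit in `P (P^n P^{*n}) P^* = P^{n+1} P^{*(n+1)}` gives `P A_* P^* = A_*`.
Since `S` is self-adjoint with `S² = A_*`, the operator `S P^*` satisfies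
`(S P^*)^* (S P^*) = P A_* P^* = A_* = S^* S`, so `‖S P^* x‖² = ⟪A_* x, x⟫ = ‖S x‖²`.
-/

open ContinuousLinearMap Filter Topology

namespace ContinuousLinearMap

theorem mul_mul_eq_of_tendsto_pow_mul_pow {R M : Type*} [Semiring R] [TopologicalSpace M]
    [T2Space M] [AddCommMonoid M] [Module R M] {T Q A : M →L[R] M}
    (hA : ∀ x, Tendsto (fun n : ℕ => (T ^ n * Q ^ n) x) atTop (𝓝 (A x))) :
    T * A * Q = A := by
  ext x
  have hshift : Tendsto (fun n : ℕ => T ((T ^ n * Q ^ n) (Q x))) atTop (𝓝 (A x)) := by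
    refine ((hA x).comp (tendsto_add_atTop_nat 1)).congr fun n => ?_
    rw [Function.comp_apply, pow_succ' T, pow_succ Q]
    rfl
  exact tendsto_nhds_unique ((T.continuous.tendsto _).comp (hA (Q x))) hshift

variable {𝕜 E : Type*} [RCLike 𝕜] [NormedAddCommGroup E] [InnerProductSpace 𝕜 E]
  [CompleteSpace E]

theorem norm_apply_adjoint_eq_of_mul_mul_adjoint_eq {S T : E →L[𝕜] E}
    (hT : T * (adjoint S * S) * adjoint T = adjoint S * S) (x : E) :
    ‖S (adjoint T x)‖ = ‖S x‖ := by
  have hconj : adjoint (S * adjoint T) * (S * adjoint T) = adjoint S * S := by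
    conv_rhs => rw [← hT]
    simp only [← star_eq_adjoint, star_mul, star_star, mul_assoc]
  rw [← mul_apply_eq_comp, apply_norm_eq_sqrt_inner_adjoint_left,
    apply_norm_eq_sqrt_inner_adjoint_left]
  exact congrArg (fun B : E →L[𝕜] E => √(RCLike.re (inner 𝕜 (B x) x))) hconj

end ContinuousLinearMap

theorem stmt_3_general {H : Type*} [NormedAddCommGroup H] [InnerProductSpace ℂ H] [CompleteSpace H]
    (P A S : H →L[ℂ] H)
    (hA : ∀ x : H, Tendsto (fun n : ℕ => (P ^ n * (adjoint P) ^ n) x) atTop (𝓝 (A x)))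
    (hSpos : S.IsPositive) (hS : S ^ 2 = A) :
    ∀ x : H, ‖S (adjoint P x)‖ = ‖S x‖ := by
  have hSS : adjoint S * S = A := by rw [hSpos.isSelfAdjoint.adjoint_eq, ← sq, hS]
  have hPAP : P * A * adjoint P = A := mul_mul_eq_of_tendsto_pow_mul_pow hA
  exact norm_apply_adjoint_eq_of_mul_mul_adjoint_eq (hSS ▸ hPAP)

/-- If `P` is a contraction, `A_*` the strong limit of `P^n P^{*n}`, and `S = A_*^{1/2}`
its positive square root, then `‖A_*^{1/2} P^* x‖ = ‖A_*^{1/2} x‖` for all `x`, so that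
`A_*^{1/2} x ↦ A_*^{1/2} P^* x` extends to an isometry of the closure of the range of `A_*`. -/
theorem stmt_3 {H : Type*} [NormedAddCommGroup H] [InnerProductSpace ℂ H] [CompleteSpace H]
    (P A S : H →L[ℂ] H) (hP : ‖P‖ ≤ 1)
    (hA : ∀ x : H, Tendsto (fun n : ℕ => (P ^ n * (adjoint P) ^ n) x) atTop (𝓝 (A x)))
    (hSpos : S.IsPositive) (hS : S ^ 2 = A) :
    ∀ x : H, ‖S (adjoint P x)‖ = ‖S x‖ :=
  stmt_3_general P A S hA hSpos hS
end

section
/- Let E_1, E_2, K_1, K_2 be Hilbert spaces and let U be a unitary from (H²(𝔻) ⊗ E_1) ⊕ K_1 to (H²(𝔻) ⊗ E_2) ⊕ K_2 satisfying (M_z ⊗ I_{E_1}) ⊕ W_1 = U*((M_z ⊗ I_{E_2}) ⊕ W_2)U, where W_1 on K_1 and W_2 on K_2 are unitary operators. Then U has the block diagonal form (I_{H²(𝔻)} ⊗ U_1) ⊕ U_2 for some unitaries U_1 : E_1 → E_2 and U_2 : K_1 → K_2. -/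
/-!
The unitary part of `S ⊕ W` (unilateral shift plus unitary) is `0 ⊕ K`: each `(0, k)` lies in the
range of every power of `S ⊕ W`, while the first component of anything in the range of
`(S ⊕ W)ⁿ` vanishes in its first `n` coordinates. As `U` intertwines the two operators, `U` and
`U⁻¹` preserve these parts; this gives `U₂`, and, by orthogonality, `U` maps `ℓ²(ℕ, E₁) ⊕ 0` onto
`ℓ²(ℕ, E₂) ⊕ 0`. The wandering subspace `δ₀ ⊗ E ⊕ 0`, orthogonal to the range of `S ⊕ W`, is
preserved as well, which gives `U₁` on the coordinate `0`; intertwining with the shifts moves it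
to every coordinate `n`.
-/

open Function

local notation "ℓ²[" E "]" => lp (fun _ : ℕ => E) 2

structure IsUnilateralShift {E : Type*} [NormedAddCommGroup E] (S : ℓ²[E] → ℓ²[E]) : Prop where
  apply_zero : ∀ f, S f 0 = 0
  apply_succ : ∀ f n, S f (n + 1) = f n

namespace IsUnilateralShift

variable {E : Type*} [NormedAddCommGroup E] {S : ℓ²[E] → ℓ²[E]}

lemma map_zero (hS : IsUnilateralShift S) : S 0 = 0 :=
  lp.ext <| funext fun
    | 0 => hS.apply_zero 0
    | n + 1 => hS.apply_succ 0 n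

lemma iterate_apply_of_lt (hS : IsUnilateralShift S) (f : ℓ²[E]) {m n : ℕ} (h : m < n) :
    (S^[n] f) m = 0 := by
  induction n generalizing m with
  | zero => omega
  | succ n ih =>
    rw [iterate_succ_apply']
    cases m with
    | zero => exact hS.apply_zero _
    | succ m => rw [hS.apply_succ]; exact ih (by omega)

lemma apply_single (hS : IsUnilateralShift S) (n : ℕ) (a : E) :
    S (lp.single 2 n a) = lp.single 2 (n + 1) a :=
  lp.ext <| funext fun
    | 0 => by rw [hS.apply_zero, lp.single_apply_ne _ _ _ (by omega)]
    | m + 1 => by simp [hS.apply_succ, lp.single_apply, Pi.single_apply]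

end IsUnilateralShift

lemma WithLp.map_iterate {p} {V : Type*} (f : V → V) (n : ℕ) :
    (WithLp.map p f)^[n] = WithLp.map p f^[n] := by
  induction n with
  | zero => rfl
  | succ n ih => rw [iterate_succ', ih, iterate_succ', WithLp.map_comp]

namespace WithLp

variable (𝕜 : Type*) [NormedField 𝕜] (E : Type*) {K : Type*}
  [NormedAddCommGroup E] [NormedSpace 𝕜 E] [NormedAddCommGroup K] [NormedSpace 𝕜 K]

def inr₂ : K →ₗᵢ[𝕜] WithLp 2 (E × K) where
  toFun k := toLp 2 (0, k)
  map_add' _ _ := by simp [← toLp_add]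
  map_smul' _ _ := by simp [← toLp_smul]
  norm_map' := norm_toLp_snd 2 E K

variable {E} (K)

def inlSingle (n : ℕ) : E →ₗᵢ[𝕜] WithLp 2 (ℓ²[E] × K) where
  toFun a := toLp 2 (lp.single 2 n a, 0)
  map_add' _ _ := by simp [← toLp_add, lp.single_add]
  map_smul' _ _ := by simp [← toLp_smul, lp.single_smul]
  norm_map' a := by simp [norm_toLp_fst, lp.norm_single]

end WithLp

section

variable {𝕜 : Type*} [RCLike 𝕜] {E K : Type*}
  [NormedAddCommGroup E] [InnerProductSpace 𝕜 E] [NormedAddCommGroup K] [InnerProductSpace 𝕜 K]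

local notation "⟪" x ", " y "⟫" => inner 𝕜 x y

lemma WithLp.inner_inr₂_right (x : WithLp 2 (E × K)) (b : K) :
    ⟪x, WithLp.inr₂ 𝕜 E b⟫ = ⟪x.snd, b⟫ := by
  simp [WithLp.inr₂]

lemma WithLp.inner_inlSingle_right (x : WithLp 2 (ℓ²[E] × K)) (n : ℕ) (a : E) :
    ⟪x, WithLp.inlSingle 𝕜 K n a⟫ = ⟪x.fst n, a⟫ := by
  simp [WithLp.inlSingle, lp.inner_single_right]

lemma WithLp.inner_inlSingle_left (n : ℕ) (a : E) (x : WithLp 2 (ℓ²[E] × K)) :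
    ⟪WithLp.inlSingle 𝕜 K n a, x⟫ = ⟪a, x.fst n⟫ := by
  simp [WithLp.inlSingle, lp.inner_single_left]

lemma IsUnilateralShift.map_prodMap_inlSingle {S : ℓ²[E] → ℓ²[E]} (hS : IsUnilateralShift S)
    (W : K ≃ₗᵢ[𝕜] K) (n : ℕ) (a : E) :
    WithLp.map 2 (Prod.map S W) (WithLp.inlSingle 𝕜 K n a) = WithLp.inlSingle 𝕜 K (n + 1) a := by
  simp [WithLp.inlSingle, hS.apply_single]

end

namespace LinearIsometryEquiv

variable {𝕜 A B H₁ H₂ : Type*}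

lemma exists_comp_eq_of_range_subset [NormedField 𝕜] [NormedAddCommGroup A] [NormedSpace 𝕜 A]
    [NormedAddCommGroup B] [NormedSpace 𝕜 B] [NormedAddCommGroup H₁] [NormedSpace 𝕜 H₁]
    [NormedAddCommGroup H₂] [NormedSpace 𝕜 H₂]
    (V : H₁ ≃ₗᵢ[𝕜] H₂) (ι₁ : A →ₗᵢ[𝕜] H₁) (ι₂ : B →ₗᵢ[𝕜] H₂)
    (h₁ : ∀ a, ∃ b, V (ι₁ a) = ι₂ b) (h₂ : ∀ b, ∃ a, V.symm (ι₂ b) = ι₁ a) :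
    ∃ V' : A ≃ₗᵢ[𝕜] B, ∀ a, V (ι₁ a) = ι₂ (V' a) := by
  choose g hg using h₁
  choose g' hg' using h₂
  refine ⟨{ toFun := g
            invFun := g'
            map_add' a b := ?_
            map_smul' c a := ?_
            left_inv a := ?_
            right_inv b := ?_
            norm_map' a := ?_ }, hg⟩
  · apply ι₂.injective
    rw [ι₂.map_add, ← hg, ← hg, ← hg, ι₁.map_add, V.map_add]
  · apply ι₂.injective
    rw [ι₂.map_smul, ← hg, ← hg, ι₁.map_smul, V.map_smul, RingHom.id_apply]
  · apply ι₁.injective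
    rw [← hg', ← hg, V.symm_apply_apply]
  · apply ι₂.injective
    rw [← hg, ← hg', V.apply_symm_apply]
  · change ‖g a‖ = ‖a‖
    rw [← ι₂.norm_map, ← hg, V.norm_map, ι₁.norm_map]

local notation "⟪" x ", " y "⟫" => inner 𝕜 x y

lemma apply_adjoint_eq_of_apply_eq [RCLike 𝕜] [NormedAddCommGroup A] [InnerProductSpace 𝕜 A]
    [NormedAddCommGroup B] [InnerProductSpace 𝕜 B] [NormedAddCommGroup H₁]
    [InnerProductSpace 𝕜 H₁] [NormedAddCommGroup H₂] [InnerProductSpace 𝕜 H₂]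
    (V : H₁ ≃ₗᵢ[𝕜] H₂) (V' : A ≃ₗᵢ[𝕜] B) {ι₁ : A → H₁} {ι₂ : B → H₂} {π₁ : H₁ → A}
    {π₂ : H₂ → B} (hπ₁ : ∀ x a, ⟪x, ι₁ a⟫ = ⟪π₁ x, a⟫) (hπ₂ : ∀ y b, ⟪y, ι₂ b⟫ = ⟪π₂ y, b⟫)
    (hV : ∀ a, V (ι₁ a) = ι₂ (V' a)) (x : H₁) :
    π₂ (V x) = V' (π₁ x) := by
  refine ext_inner_right 𝕜 fun b => ?_
  calc ⟪π₂ (V x), b⟫ = ⟪V x, V (ι₁ (V'.symm b))⟫ := by rw [← hπ₂, hV, V'.apply_symm_apply]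
    _ = ⟪π₁ x, V'.symm b⟫ := by rw [V.inner_map_map, hπ₁]
    _ = ⟪V' (π₁ x), b⟫ := by rw [← V'.inner_map_map, V'.apply_symm_apply]

end LinearIsometryEquiv

namespace IsUnilateralShift

lemma exists_apply_toLp_zero_eq {E₁ E₂ K₁ K₂ : Type*} [NormedAddCommGroup E₁]
    [NormedAddCommGroup E₂] [Zero K₁] [Zero K₂] {S₁ : ℓ²[E₁] → ℓ²[E₁]} {S₂ : ℓ²[E₂] → ℓ²[E₂]}
    (hS₁ : IsUnilateralShift S₁) (hS₂ : IsUnilateralShift S₂) {W₁ : K₁ → K₁} (hW₁ : Surjective W₁)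
    {W₂ : K₂ → K₂} {V : WithLp 2 (ℓ²[E₁] × K₁) → WithLp 2 (ℓ²[E₂] × K₂)}
    (hV : Semiconj V (WithLp.map 2 (Prod.map S₁ W₁)) (WithLp.map 2 (Prod.map S₂ W₂))) (k : K₁) :
    ∃ k', V (WithLp.toLp 2 (0, k)) = WithLp.toLp 2 (0, k') := by
  have hfst : (V (WithLp.toLp 2 (0, k))).fst = 0 := by
    refine lp.ext (funext fun m => ?_)
    obtain ⟨k₀, rfl⟩ := hW₁.iterate (m + 1) k
    have hk : WithLp.toLp 2 (0, W₁^[m + 1] k₀) =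
        (WithLp.map 2 (Prod.map S₁ W₁))^[m + 1] (WithLp.toLp 2 (0, k₀)) := by
      rw [WithLp.map_iterate, Prod.map_iterate]
      simp only [WithLp.map, Prod.map, iterate_fixed hS₁.map_zero]
    rw [hk, (hV.iterate_right _).eq, WithLp.map_iterate, Prod.map_iterate]
    exact hS₂.iterate_apply_of_lt _ (Nat.lt_succ_self m)
  exact ⟨(V (WithLp.toLp 2 (0, k))).snd, WithLp.ofLp_injective 2 (Prod.ext hfst rfl)⟩

variable {𝕜 : Type*} [RCLike 𝕜] {E₁ E₂ K₁ K₂ : Type*}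
  [NormedAddCommGroup E₁] [InnerProductSpace 𝕜 E₁] [NormedAddCommGroup E₂] [InnerProductSpace 𝕜 E₂]
  [NormedAddCommGroup K₁] [InnerProductSpace 𝕜 K₁] [NormedAddCommGroup K₂] [InnerProductSpace 𝕜 K₂]
  {S₁ : ℓ²[E₁] → ℓ²[E₁]} {S₂ : ℓ²[E₂] → ℓ²[E₂]} {W₁ : K₁ ≃ₗᵢ[𝕜] K₁} {W₂ : K₂ ≃ₗᵢ[𝕜] K₂}
  {V : WithLp 2 (ℓ²[E₁] × K₁) ≃ₗᵢ[𝕜] WithLp 2 (ℓ²[E₂] × K₂)}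

local notation "⟪" x ", " y "⟫" => inner 𝕜 x y

lemma exists_snd_apply_eq (hS₁ : IsUnilateralShift S₁) (hS₂ : IsUnilateralShift S₂)
    (hV : Semiconj V (WithLp.map 2 (Prod.map S₁ W₁)) (WithLp.map 2 (Prod.map S₂ W₂))) :
    ∃ U₂ : K₁ ≃ₗᵢ[𝕜] K₂, ∀ x, (V x).snd = U₂ x.snd := by
  have hV' := hV.inverse_left V.symm_apply_apply V.apply_symm_apply
  obtain ⟨U₂, hU₂⟩ := V.exists_comp_eq_of_range_subset (WithLp.inr₂ 𝕜 _) (WithLp.inr₂ 𝕜 _)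
    (hS₁.exists_apply_toLp_zero_eq hS₂ W₁.surjective hV)
    (hS₂.exists_apply_toLp_zero_eq hS₁ W₂.surjective hV')
  exact ⟨U₂, V.apply_adjoint_eq_of_apply_eq U₂ WithLp.inner_inr₂_right WithLp.inner_inr₂_right
    hU₂⟩

lemma exists_apply_inlSingle_zero_eq (hS₁ : IsUnilateralShift S₁) (hS₂ : IsUnilateralShift S₂)
    (hV : Semiconj V.symm (WithLp.map 2 (Prod.map S₂ W₂)) (WithLp.map 2 (Prod.map S₁ W₁)))
    {a : E₁} (hsnd : (V (WithLp.inlSingle 𝕜 K₁ 0 a)).snd = 0) :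
    ∃ b, V (WithLp.inlSingle 𝕜 K₁ 0 a) = WithLp.inlSingle 𝕜 K₂ 0 b := by
  set z := V (WithLp.inlSingle 𝕜 K₁ 0 a)
  have hsucc (m : ℕ) : z.fst (m + 1) = 0 := by
    set y := WithLp.inlSingle 𝕜 K₂ m (z.fst (m + 1))
    refine (inner_self_eq_zero (𝕜 := 𝕜)).mp ?_
    calc ⟪z.fst (m + 1), z.fst (m + 1)⟫
        = ⟪z, WithLp.map 2 (Prod.map S₂ W₂) y⟫ := by
          rw [hS₂.map_prodMap_inlSingle, WithLp.inner_inlSingle_right]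
      _ = ⟪WithLp.inlSingle 𝕜 K₁ 0 a, WithLp.map 2 (Prod.map S₁ W₁) (V.symm y)⟫ := by
          rw [← V.symm.inner_map_map, hV.eq, V.symm_apply_apply]
      _ = 0 := by rw [WithLp.inner_inlSingle_left]; simp [hS₁.apply_zero]
  refine ⟨z.fst 0, WithLp.ofLp_injective 2 (Prod.ext (lp.ext (funext fun m => ?_)) hsnd)⟩
  cases m with
  | zero => simp [WithLp.inlSingle]
  | succ m => simp [WithLp.inlSingle, hsucc]

lemma apply_inlSingle_of_apply_inlSingle_zero (hS₁ : IsUnilateralShift S₁)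
    (hS₂ : IsUnilateralShift S₂)
    (hV : Semiconj V (WithLp.map 2 (Prod.map S₁ W₁)) (WithLp.map 2 (Prod.map S₂ W₂)))
    {U₁ : E₁ → E₂} (h₀ : ∀ a, V (WithLp.inlSingle 𝕜 K₁ 0 a) = WithLp.inlSingle 𝕜 K₂ 0 (U₁ a))
    (n : ℕ) (a : E₁) : V (WithLp.inlSingle 𝕜 K₁ n a) = WithLp.inlSingle 𝕜 K₂ n (U₁ a) := by
  induction n with
  | zero => exact h₀ a
  | succ n ih =>
    rw [← hS₁.map_prodMap_inlSingle W₁, hV.eq, ih, hS₂.map_prodMap_inlSingle]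

lemma exists_fst_apply_eq (hS₁ : IsUnilateralShift S₁) (hS₂ : IsUnilateralShift S₂)
    (hV : Semiconj V (WithLp.map 2 (Prod.map S₁ W₁)) (WithLp.map 2 (Prod.map S₂ W₂))) :
    ∃ U₁ : E₁ ≃ₗᵢ[𝕜] E₂, ∀ x n, (V x).fst n = U₁ (x.fst n) := by
  have hV' := hV.inverse_left V.symm_apply_apply V.apply_symm_apply
  obtain ⟨U₂, hU₂⟩ := hS₁.exists_snd_apply_eq hS₂ hV
  obtain ⟨U₂', hU₂'⟩ := hS₂.exists_snd_apply_eq hS₁ hV'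
  obtain ⟨U₁, hU₁⟩ := V.exists_comp_eq_of_range_subset (WithLp.inlSingle 𝕜 K₁ 0)
    (WithLp.inlSingle 𝕜 K₂ 0)
    (fun a => hS₁.exists_apply_inlSingle_zero_eq hS₂ hV' (by simp [hU₂, WithLp.inlSingle]))
    (fun b => hS₂.exists_apply_inlSingle_zero_eq (V := V.symm) hS₁ hV
      (by simp [hU₂', WithLp.inlSingle]))
  refine ⟨U₁, fun x n => V.apply_adjoint_eq_of_apply_eq U₁ (WithLp.inner_inlSingle_right · n)
    (WithLp.inner_inlSingle_right · n) ?_ x⟩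
  exact hS₁.apply_inlSingle_of_apply_inlSingle_zero hS₂ hV hU₁ n

end IsUnilateralShift

theorem stmt_7_general {E₁ E₂ K₁ K₂ : Type*}
    [NormedAddCommGroup E₁] [InnerProductSpace ℂ E₁]
    [NormedAddCommGroup E₂] [InnerProductSpace ℂ E₂]
    [NormedAddCommGroup K₁] [InnerProductSpace ℂ K₁]
    [NormedAddCommGroup K₂] [InnerProductSpace ℂ K₂]
    (Sh₁ : lp (fun _ : ℕ => E₁) 2 →L[ℂ] lp (fun _ : ℕ => E₁) 2)
    (hSh₁0 : ∀ f, Sh₁ f 0 = 0) (hSh₁ : ∀ f n, Sh₁ f (n + 1) = f n)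
    (Sh₂ : lp (fun _ : ℕ => E₂) 2 →L[ℂ] lp (fun _ : ℕ => E₂) 2)
    (hSh₂0 : ∀ f, Sh₂ f 0 = 0) (hSh₂ : ∀ f n, Sh₂ f (n + 1) = f n)
    (W₁ : K₁ ≃ₗᵢ[ℂ] K₁) (W₂ : K₂ ≃ₗᵢ[ℂ] K₂)
    (U : WithLp 2 (lp (fun _ : ℕ => E₁) 2 × K₁) ≃ₗᵢ[ℂ]
         WithLp 2 (lp (fun _ : ℕ => E₂) 2 × K₂))
    (hU : ∀ x : WithLp 2 (lp (fun _ : ℕ => E₁) 2 × K₁),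
      (WithLp.equiv 2 _).symm
          (Sh₁ (WithLp.equiv 2 _ x).1, W₁ (WithLp.equiv 2 _ x).2) =
        U.symm ((WithLp.equiv 2 _).symm
          (Sh₂ (WithLp.equiv 2 _ (U x)).1, W₂ (WithLp.equiv 2 _ (U x)).2))) :
    ∃ (U₁ : E₁ ≃ₗᵢ[ℂ] E₂) (U₂ : K₁ ≃ₗᵢ[ℂ] K₂),
      ∀ x : WithLp 2 (lp (fun _ : ℕ => E₁) 2 × K₁),
        (∀ n : ℕ, (WithLp.equiv 2 _ (U x)).1 n = U₁ ((WithLp.equiv 2 _ x).1 n)) ∧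
        (WithLp.equiv 2 _ (U x)).2 = U₂ ((WithLp.equiv 2 _ x).2) := by
  have hS₁ : IsUnilateralShift Sh₁ := ⟨hSh₁0, hSh₁⟩
  have hS₂ : IsUnilateralShift Sh₂ := ⟨hSh₂0, hSh₂⟩
  have hV : Semiconj U (WithLp.map 2 (Prod.map Sh₁ W₁)) (WithLp.map 2 (Prod.map Sh₂ W₂)) :=
    fun x => (U.symm_apply_eq.mp (hU x).symm).symm
  obtain ⟨U₁, hU₁⟩ := hS₁.exists_fst_apply_eq hS₂ hV
  obtain ⟨U₂, hU₂⟩ := hS₁.exists_snd_apply_eq hS₂ hV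
  exact ⟨U₁, U₂, fun x => ⟨hU₁ x, hU₂ x⟩⟩

/-- If `U : (H²(𝔻) ⊗ E₁) ⊕ K₁ → (H²(𝔻) ⊗ E₂) ⊕ K₂` is a unitary with
`(M_z ⊗ I_{E₁}) ⊕ W₁ = U*((M_z ⊗ I_{E₂}) ⊕ W₂)U` for unitaries `W₁, W₂`, then
`U = (I ⊗ U₁) ⊕ U₂` for some unitaries `U₁ : E₁ → E₂` and `U₂ : K₁ → K₂`.
Here `H²(𝔻) ⊗ E` is realized as `ℓ²(ℕ, E)` and `M_z ⊗ I_E` as the shift `Sh`. -/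
theorem stmt_7 {E₁ E₂ K₁ K₂ : Type*}
    [NormedAddCommGroup E₁] [InnerProductSpace ℂ E₁] [CompleteSpace E₁]
    [NormedAddCommGroup E₂] [InnerProductSpace ℂ E₂] [CompleteSpace E₂]
    [NormedAddCommGroup K₁] [InnerProductSpace ℂ K₁] [CompleteSpace K₁]
    [NormedAddCommGroup K₂] [InnerProductSpace ℂ K₂] [CompleteSpace K₂]
    (Sh₁ : lp (fun _ : ℕ => E₁) 2 →L[ℂ] lp (fun _ : ℕ => E₁) 2)
    (hSh₁0 : ∀ f, Sh₁ f 0 = 0) (hSh₁ : ∀ f n, Sh₁ f (n + 1) = f n)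
    (Sh₂ : lp (fun _ : ℕ => E₂) 2 →L[ℂ] lp (fun _ : ℕ => E₂) 2)
    (hSh₂0 : ∀ f, Sh₂ f 0 = 0) (hSh₂ : ∀ f n, Sh₂ f (n + 1) = f n)
    (W₁ : K₁ ≃ₗᵢ[ℂ] K₁) (W₂ : K₂ ≃ₗᵢ[ℂ] K₂)
    (U : WithLp 2 (lp (fun _ : ℕ => E₁) 2 × K₁) ≃ₗᵢ[ℂ]
         WithLp 2 (lp (fun _ : ℕ => E₂) 2 × K₂))
    (hU : ∀ x : WithLp 2 (lp (fun _ : ℕ => E₁) 2 × K₁),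
      (WithLp.equiv 2 _).symm
          (Sh₁ (WithLp.equiv 2 _ x).1, W₁ (WithLp.equiv 2 _ x).2) =
        U.symm ((WithLp.equiv 2 _).symm
          (Sh₂ (WithLp.equiv 2 _ (U x)).1, W₂ (WithLp.equiv 2 _ (U x)).2))) :
    ∃ (U₁ : E₁ ≃ₗᵢ[ℂ] E₂) (U₂ : K₁ ≃ₗᵢ[ℂ] K₂),
      ∀ x : WithLp 2 (lp (fun _ : ℕ => E₁) 2 × K₁),
        (∀ n : ℕ, (WithLp.equiv 2 _ (U x)).1 n = U₁ ((WithLp.equiv 2 _ x).1 n)) ∧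
        (WithLp.equiv 2 _ (U x)).2 = U₂ ((WithLp.equiv 2 _ x).2) :=
  stmt_7_general Sh₁ hSh₁0 hSh₁ Sh₂ hSh₂0 hSh₂ W₁ W₂ U hU
end

section
/- Let V : H → K be an isometry with range invariant under T* for a bounded operator T on K, and set S = V* T V. Then ‖f(S)‖ ≤ ‖f(T)‖ for every polynomial f in one variable. In particular, if T is a contraction then S is a contraction. -/
/-!
Since `V* V = 1`, the operator `V V*` is the orthogonal projection onto `Ran V`; as `T*` maps
`Ran V` into itself, `V V* T* V = T* V`, i.e. `V* T V V* = V* T`. Hence the compression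
`A ↦ V* A V` satisfies `V* (T A) V = S (V* A V)`, so `f(S) = V* f(T) V` for every polynomial `f`,
and compressing by the contractions `V`, `V*` does not increase the norm.
-/

open ContinuousLinearMap Filter Topology

namespace ContinuousLinearMap

variable {𝕜 H K : Type*} [RCLike 𝕜]
  [NormedAddCommGroup H] [InnerProductSpace 𝕜 H] [CompleteSpace H]
  [NormedAddCommGroup K] [InnerProductSpace 𝕜 K] [CompleteSpace K]
  {V : H →L[𝕜] K} {T : K →L[𝕜] K}

lemma adjoint_comp_comp_adjoint_eq_of_adjoint_invariant (hV : adjoint V ∘L V = 1)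
    (hinv : ∀ x : H, ∃ y : H, V y = adjoint T (V x)) :
    adjoint V ∘L T ∘L V ∘L adjoint V = adjoint V ∘L T := by
  have hproj : V ∘L adjoint V ∘L adjoint T ∘L V = adjoint T ∘L V := by
    ext x
    obtain ⟨y, hy⟩ := hinv x
    have hy' : adjoint V (V y) = y := by rw [← comp_apply, hV]; rfl
    simp only [comp_apply, ← hy, hy']
  simpa only [adjoint_comp, adjoint_adjoint, comp_assoc] using congrArg adjoint hproj

lemma adjoint_comp_mul_comp_eq_of_adjoint_invariant (hV : adjoint V ∘L V = 1)
    (hinv : ∀ x : H, ∃ y : H, V y = adjoint T (V x)) (A : K →L[𝕜] K) :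
    adjoint V ∘L (T * A) ∘L V = (adjoint V ∘L T ∘L V) * (adjoint V ∘L A ∘L V) := by
  have key := congrArg (· ∘L A ∘L V) (adjoint_comp_comp_adjoint_eq_of_adjoint_invariant hV hinv)
  simp only [mul_def, comp_assoc] at key ⊢
  exact key.symm

lemma adjoint_comp_pow_comp_eq_of_adjoint_invariant (hV : adjoint V ∘L V = 1)
    (hinv : ∀ x : H, ∃ y : H, V y = adjoint T (V x)) (n : ℕ) :
    adjoint V ∘L (T ^ n) ∘L V = (adjoint V ∘L T ∘L V) ^ n := by
  induction n with
  | zero => simpa only [pow_zero, one_def, id_comp] using hV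
  | succ n ih =>
    rw [pow_succ', pow_succ', adjoint_comp_mul_comp_eq_of_adjoint_invariant hV hinv, ih]

lemma adjoint_comp_aeval_comp_eq_of_adjoint_invariant (hV : adjoint V ∘L V = 1)
    (hinv : ∀ x : H, ∃ y : H, V y = adjoint T (V x)) (f : Polynomial 𝕜) :
    adjoint V ∘L Polynomial.aeval T f ∘L V = Polynomial.aeval (adjoint V ∘L T ∘L V) f := by
  induction f using Polynomial.induction_on' with
  | add p q hp hq => rw [map_add, map_add, add_comp, comp_add, hp, hq]
  | monomial n a =>
    rw [Polynomial.aeval_monomial, Polynomial.aeval_monomial, Algebra.algebraMap_eq_smul_one,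
      Algebra.algebraMap_eq_smul_one, smul_one_mul, smul_one_mul, smul_comp, comp_smul,
      adjoint_comp_pow_comp_eq_of_adjoint_invariant hV hinv]

lemma norm_adjoint_comp_comp_le (hV : ∀ x : H, ‖V x‖ = ‖x‖) (A : K →L[𝕜] K) :
    ‖adjoint V ∘L A ∘L V‖ ≤ ‖A‖ := by
  have hVnorm : ‖V‖ ≤ 1 := V.opNorm_le_bound zero_le_one fun x => by rw [hV, one_mul]
  calc ‖adjoint V ∘L A ∘L V‖ ≤ ‖adjoint V‖ * (‖A‖ * ‖V‖) :=
        (opNorm_comp_le _ _).trans (by gcongr; exact opNorm_comp_le _ _)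
    _ ≤ 1 * (‖A‖ * 1) := by
        rw [LinearIsometryEquiv.norm_map]
        gcongr
    _ = ‖A‖ := by ring

end ContinuousLinearMap

/-- If `V : H → K` is an isometry whose range is invariant under `T*`, and `S = V* T V`,
then `‖f(S)‖ ≤ ‖f(T)‖` for every polynomial `f` in one variable; in particular, if `T`
is a contraction, then `S` is a contraction. -/
theorem stmt_10 {H K : Type*} [NormedAddCommGroup H] [InnerProductSpace ℂ H] [CompleteSpace H]
    [NormedAddCommGroup K] [InnerProductSpace ℂ K] [CompleteSpace K]
    (V : H →L[ℂ] K) (hV : ∀ x : H, ‖V x‖ = ‖x‖)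
    (T : K →L[ℂ] K) (hinv : ∀ x : H, ∃ y : H, V y = adjoint T (V x))
    (S : H →L[ℂ] H) (hS : S = (adjoint V).comp (T.comp V)) :
    (∀ f : Polynomial ℂ, ‖Polynomial.aeval S f‖ ≤ ‖Polynomial.aeval T f‖) ∧
    (‖T‖ ≤ 1 → ‖S‖ ≤ 1) := by
  have hVV : adjoint V ∘L V = 1 := (norm_map_iff_adjoint_comp_self V).mp hV
  have hpoly (f : Polynomial ℂ) : ‖Polynomial.aeval S f‖ ≤ ‖Polynomial.aeval T f‖ := by
    rw [hS, ← adjoint_comp_aeval_comp_eq_of_adjoint_invariant hVV hinv]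
    exact norm_adjoint_comp_comp_le hV _
  have hST : ‖S‖ ≤ ‖T‖ := by simpa only [Polynomial.aeval_X] using hpoly Polynomial.X
  exact ⟨hpoly, hST.trans⟩
end
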